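/- arXiv:2410.11158 — 2 statements merged into one kernel-verified Lean document; each statement's English description precedes it below -/
import Mathlib

section
/- Let U(T) = Σₙ e^{-iεₙ(φ)T} |n(φ)⟩⟨n(φ)| be the spectral decomposition of a unitary on ℂᵈ with smooth quasienergies εₙ(φ) and smooth orthonormal eigenprojectors. Then (i/T) U(T)† ∂_φ U(T) = Σₙ (∂_φ εₙ) |n⟩⟨n| + R(T), where the operator norm of R(T) is bounded by C/T for a constant C independent of T. -/
open Matrix Filter

attribute [local instance] Matrix.normedAddCommGroup Matrix.normedSpace

/-! The unitary and its adjoint are diagonal in the orthogonal idempotents `Pₙ` with unimodular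
coefficients, so the terms `-i ε'ₙ T Pₙ` of `∂_φ U` collapse to `-i T Σₙ ε'ₙ Pₙ`, which the prefactor
`i/T` turns into `Σₙ ε'ₙ Pₙ`. What remains is `(i/T) Σₘₙ e^{i(εₘ-εₙ)T} Pₘ P'ₙ`, whose norm is at
most `(1/T) Σₘₙ ‖Pₘ P'ₙ‖`. -/

theorem OrthogonalIdempotents.sum_smul_mul_sum_smul_sub_smul {R A ι : Type*} [CommRing R]
    [Ring A] [Algebra R A] [Fintype ι] [DecidableEq ι] {P : ι → A}
    (hP : OrthogonalIdempotents P) (P' : ι → A) {a b : ι → R} (c : ι → R)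
    (hba : ∀ n, b n * a n = 1) :
    (∑ m, b m • P m) * ∑ n, a n • (P' n - c n • P n) =
      ∑ m, ∑ n, (b m * a n) • (P m * P' n) - ∑ n, c n • P n := by
  have hterm : ∀ m n, b m • P m * a n • (P' n - c n • P n) =
      (b m * a n) • (P m * P' n) - if m = n then c n • P n else 0 := fun m n => by
    rw [smul_mul_smul_comm, mul_sub, mul_smul_comm, hP.mul_eq]
    split_ifs with h
    · subst h
      rw [smul_sub, smul_smul, hba, one_mul]
    · simp only [smul_zero, sub_zero]
  simp only [Finset.sum_mul_sum, hterm, Finset.sum_sub_distrib, Finset.sum_ite_eq,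
    Finset.mem_univ, if_true]

theorem norm_sum_sum_smul_le {𝕜 E ι κ : Type*} [NormedField 𝕜] [SeminormedAddCommGroup E]
    [NormedSpace 𝕜 E] (s : Finset ι) (t : Finset κ) {z : ι → κ → 𝕜} (v : ι → κ → E)
    (hz : ∀ m n, ‖z m n‖ ≤ 1) :
    ‖∑ m ∈ s, ∑ n ∈ t, z m n • v m n‖ ≤ ∑ m ∈ s, ∑ n ∈ t, ‖v m n‖ := by
  refine (norm_sum_le _ _).trans (Finset.sum_le_sum fun m _ => ?_)
  refine (norm_sum_le _ _).trans (Finset.sum_le_sum fun n _ => ?_)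
  exact (norm_smul_le _ _).trans (mul_le_of_le_one_left (norm_nonneg _) (hz m n))

theorem stmt1_general (d : ℕ) (ε ε' : Fin d → ℝ) (P P' : Fin d → Matrix (Fin d) (Fin d) ℂ)
    (hherm : ∀ n, (P n).IsHermitian)
    (horth : ∀ n m, P n * P m = if n = m then P n else 0)
    (U : ℝ → Matrix (Fin d) (Fin d) ℂ)
    (hU : ∀ T : ℝ, U T = ∑ n, Complex.exp (-(ε n : ℂ) * T * Complex.I) • P n)
    (U' : ℝ → Matrix (Fin d) (Fin d) ℂ)
    (hU' : ∀ T : ℝ, U' T = ∑ n, Complex.exp (-(ε n : ℂ) * T * Complex.I) •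
      (P' n - ((ε' n : ℂ) * T * Complex.I) • P n)) :
    ∃ C : ℝ, ∀ T : ℝ, 0 < T →
      ‖(Complex.I / (T : ℂ)) • ((U T)ᴴ * U' T) - ∑ n, ((ε' n : ℂ)) • P n‖ ≤ C / T := by
  refine ⟨∑ m, ∑ n, ‖P m * P' n‖, fun T hT => ?_⟩
  set a : Fin d → ℂ := fun n => Complex.exp (-(ε n : ℂ) * T * Complex.I)
  have ha : ∀ n, ‖a n‖ = 1 := fun n => by
    simpa [a] using Complex.norm_exp_ofReal_mul_I (-(ε n * T))
  have hUstar : (U T)ᴴ = ∑ m, star (a m) • P m := by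
    simp only [hU, conjTranspose_sum, conjTranspose_smul, (hherm _).eq, a]
  have key : (Complex.I / T) • ((U T)ᴴ * U' T) - ∑ n, (ε' n : ℂ) • P n =
      (Complex.I / T) • ∑ m, ∑ n, (star (a m) * a n) • (P m * P' n) := by
    rw [hUstar, hU', (OrthogonalIdempotents.iff_mul_eq.mpr horth).sum_smul_mul_sum_smul_sub_smul
      P' _ fun n => by rw [Complex.star_def, Complex.conj_mul', ha, Complex.ofReal_one, one_pow]]
    have hdiag : (Complex.I / T) • ∑ n, ((ε' n : ℂ) * T * Complex.I) • P n =
        -∑ n, (ε' n : ℂ) • P n := by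
      have hT0 : (T : ℂ) ≠ 0 := by exact_mod_cast hT.ne'
      simp only [Finset.smul_sum, smul_smul, ← Finset.sum_neg_distrib, ← neg_smul]
      congr! 2
      field_simp
      rw [Complex.I_sq, neg_one_mul]
    rw [smul_sub, hdiag, sub_neg_eq_add, add_sub_cancel_right]
  have hI : ‖Complex.I / T‖ = T⁻¹ := by simp [abs_of_pos hT]
  rw [key, norm_smul, hI, div_eq_inv_mul]
  refine mul_le_mul_of_nonneg_left (norm_sum_sum_smul_le _ _ _ fun m n => ?_) (by positivity)
  rw [norm_mul, norm_star, ha, ha, one_mul]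

/-- If `U(T) = Σₙ e^{-iεₙ(φ)T} Pₙ(φ)` is the spectral decomposition of a
unitary on ℂᵈ, with real quasienergies `εₙ` (φ-derivative `ε'ₙ`) and orthonormal Hermitian
eigenprojectors `Pₙ` (φ-derivative `P'ₙ`), then
`(i/T) U(T)† ∂_φ U(T) = Σₙ (∂_φ εₙ) Pₙ + R(T)` with `‖R(T)‖ ≤ C/T` for `C` independent
of `T`. Here `∂_φ U(T) = Σₙ e^{-iεₙT}(P'ₙ - i ε'ₙ T Pₙ)`. -/
theorem stmt1 (d : ℕ) (ε ε' : Fin d → ℝ) (P P' : Fin d → Matrix (Fin d) (Fin d) ℂ)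
    (hherm : ∀ n, (P n).IsHermitian)
    (horth : ∀ n m, P n * P m = if n = m then P n else 0)
    (hcomplete : ∑ n, P n = 1)
    (U : ℝ → Matrix (Fin d) (Fin d) ℂ)
    (hU : ∀ T : ℝ, U T = ∑ n, Complex.exp (-(ε n : ℂ) * T * Complex.I) • P n)
    (U' : ℝ → Matrix (Fin d) (Fin d) ℂ)
    (hU' : ∀ T : ℝ, U' T = ∑ n, Complex.exp (-(ε n : ℂ) * T * Complex.I) •
      (P' n - ((ε' n : ℂ) * T * Complex.I) • P n)) :
    ∃ C : ℝ, ∀ T : ℝ, 0 < T →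
      ‖(Complex.I / (T : ℂ)) • ((U T)ᴴ * U' T) - ∑ n, ((ε' n : ℂ)) • P n‖ ≤ C / T :=
  stmt1_general d ε ε' P P' hherm horth U hU U' hU'
end

section
/- Let H(t) be a smooth family of Hermitian operators on a finite-dimensional Hilbert space depending on parameters φ₁, φ₂ through the combinations ω₁t+φ₁ and ω₂t+φ₂ (i.e., ∂_{φⱼ} H = (1/ωⱼ) ∂_t H_j where H_j is the j-th drive term). Then the power operators satisfy energy conservation: ω₁P₁ + ω₂P₂ = 0, where Pⱼ = lim_{T→∞} (i/T) U(T)† ∂_{φⱼ} U(T). Equivalently, for each quasienergy εₙ(φ₁,φ₂), (ω₁∂_{φ₁} + ω₂∂_{φ₂}) εₙ = 0. -/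
open Matrix Filter Topology

attribute [local instance] Matrix.normedAddCommGroup Matrix.normedSpace

/-!
Shifting time by `s` is the same as shifting the phases by `(ω₁ s, ω₂ s)`, so the propagators
satisfy `U(t; φ + ω s) = U(s + t; φ) U(s; φ)†`. Differentiating at `s = 0` expresses the phase
derivative along `ω` through time derivatives only:
`U(T)† (ω₁ ∂_{φ₁} + ω₂ ∂_{φ₂}) U(T) = i (H(0) - U(T)† H(T) U(T))`.
The right-hand side is bounded uniformly in `T`, since `U` is unitary and the periodic drives
are bounded; divided by `T` it tends to `0`, whence `ω₁ P₁ + ω₂ P₂ = 0`.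
-/

open Asymptotics in
theorem hasFDerivAt_uncurry_coprod {𝕜 E₁ E₂ F : Type*} [NontriviallyNormedField 𝕜]
    [IsRCLikeNormedField 𝕜] [NormedAddCommGroup E₁] [NormedSpace 𝕜 E₁]
    [NormedAddCommGroup E₂] [NormedSpace 𝕜 E₂] [NormedAddCommGroup F] [NormedSpace 𝕜 F]
    {u : E₁ × E₂} {f : E₁ → E₂ → F} {f₁ : E₁ → E₂ → E₁ →L[𝕜] F} {f₂ : E₂ →L[𝕜] F}
    (df₁ : ∀ᶠ v in 𝓝 u, HasFDerivAt (f · v.2) (↿f₁ v) v.1) (cf₁ : ContinuousAt ↿f₁ u)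
    (df₂ : HasFDerivAt (f u.1) f₂ u.2) : HasFDerivAt ↿f ((↿f₁ u).coprod f₂) u := by
  rw [hasFDerivAt_iff_isLittleO_nhds_zero]
  calc
    fun v : E₁ × E₂ => f (u.1 + v.1) (u.2 + v.2) - f u.1 u.2 - ((↿f₁ u).coprod f₂) v
    _ = fun v : E₁ × E₂ => (f (u.1 + v.1) (u.2 + v.2) - f u.1 (u.2 + v.2) - ↿f₁ u v.1)
          + (f u.1 (u.2 + v.2) - f u.1 u.2 - f₂ v.2) := by
      ext v
      simp only [ContinuousLinearMap.coprod_apply]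
      abel
    _ =o[𝓝 0] fun v => v := by
      apply IsLittleO.add
      · calc
          _ =o[𝓝 0] (fun v => v.1 : E₁ × E₂ → E₁) := by
            let : RCLike 𝕜 := IsRCLikeNormedField.rclike 𝕜
            let : NormedSpace ℝ E₁ := RestrictScalars.normedSpace ℝ 𝕜 E₁
            refine isLittleO_iff.2 fun ε hε => ?_
            obtain ⟨δ, hδ, hball⟩ := Metric.eventually_nhds_iff_ball.1
              (df₁.and ((Metric.tendsto_nhds.1 cf₁) ε hε))
            filter_upwards [Metric.ball_mem_nhds 0 hδ] with v hv
            have hmem : ∀ z ∈ Metric.ball u.1 δ, (z, u.2 + v.2) ∈ Metric.ball u δ := by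
              intro z hz
              rw [Metric.mem_ball, Prod.dist_eq]
              refine max_lt hz ?_
              simpa using (norm_snd_le v).trans_lt (mem_ball_zero_iff.1 hv)
            have := (convex_ball u.1 δ).norm_image_sub_le_of_norm_hasFDerivWithin_le'
              (f := (f · (u.2 + v.2))) (φ := ↿f₁ u) (C := ε)
              (fun z hz => (hball _ (hmem z hz)).1.hasFDerivWithinAt)
              (fun z hz => by simpa [dist_eq_norm] using (hball _ (hmem z hz)).2.le)
              (Metric.mem_ball_self hδ) (x := u.1) (y := u.1 + v.1)
              (by simpa using (norm_fst_le v).trans_lt (mem_ball_zero_iff.1 hv))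
            simpa using this
          _ =O[𝓝 0] fun v => v := isBigO_fst_prod
      · calc
          _ =o[𝓝 0] (fun v => v.2 : E₁ × E₂ → E₂) :=
            (hasFDerivAt_iff_isLittleO_nhds_zero.1 df₂).comp_tendsto
              (continuous_snd.tendsto' 0 0 rfl)
          _ =O[𝓝 0] fun v => v := isBigO_snd_prod

theorem tendsto_div_smul_atTop_zero {E : Type*} [NormedAddCommGroup E] [NormedSpace ℂ E]
    (c : ℂ) {g : ℝ → E} {C : ℝ} (hg : ∀ T, ‖g T‖ ≤ C) :
    Tendsto (fun T : ℝ => (c / T) • g T) atTop (𝓝 0) := by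
  have hinv : Tendsto (fun T : ℝ => c / T) atTop (𝓝 0) := by
    simpa [div_eq_mul_inv] using
      ((Complex.continuous_ofReal.tendsto 0).comp tendsto_inv_atTop_zero).const_mul c
  exact hinv.zero_smul_isBoundedUnder_le (isBoundedUnder_of ⟨C, hg⟩)

theorem HasDerivAt.matrix_mul {𝕜 α l m n : Type*} [NontriviallyNormedField 𝕜] [Fintype m]
    [Fintype n] [NormedRing α] [NormedAlgebra 𝕜 α] {f : 𝕜 → Matrix l m α}
    {g : 𝕜 → Matrix m n α} {f' : Matrix l m α} {g' : Matrix m n α} {x : 𝕜}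
    (hf : HasDerivAt f f' x) (hg : HasDerivAt g g' x) :
    HasDerivAt (fun t => f t * g t) (f' * g x + f x * g') x := by
  refine hasDerivAt_pi.2 fun i => hasDerivAt_pi.2 fun j => ?_
  simp only [Matrix.mul_apply, Matrix.add_apply, ← Finset.sum_add_distrib]
  exact HasDerivAt.fun_sum fun k _ =>
    (hasDerivAt_pi.1 (hasDerivAt_pi.1 hf i) k).mul (hasDerivAt_pi.1 (hasDerivAt_pi.1 hg k) j)

theorem isBounded_range_add_add {E : Type*} [SeminormedAddCommGroup E] (c : E) {f g : ℝ → E}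
    (hf : Bornology.IsBounded (Set.range f)) (hg : Bornology.IsBounded (Set.range g)) :
    Bornology.IsBounded (Set.range fun p : ℝ × ℝ => c + f p.1 + g p.2) := by
  obtain ⟨Cf, hCf⟩ := isBounded_iff_forall_norm_le.1 hf
  obtain ⟨Cg, hCg⟩ := isBounded_iff_forall_norm_le.1 hg
  refine isBounded_iff_forall_norm_le.2 ⟨‖c‖ + Cf + Cg, ?_⟩
  rintro _ ⟨⟨a, b⟩, rfl⟩
  grw [norm_add₃_le, hCf _ ⟨a, rfl⟩, hCg _ ⟨b, rfl⟩]

namespace Matrix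

variable {α l m n : Type*}

-- `‖·‖` is the entrywise sup norm, which is not submultiplicative.
theorem norm_mul_le_card_mul [Fintype l] [Fintype m] [Fintype n] [NormedRing α]
    (A : Matrix l m α) (B : Matrix m n α) :
    ‖A * B‖ ≤ Fintype.card m * (‖A‖ * ‖B‖) := by
  refine (norm_le_iff (by positivity)).2 fun i j => ?_
  calc ‖(A * B) i j‖ ≤ ∑ k, ‖A i k‖ * ‖B k j‖ :=
        (norm_sum_le _ _).trans (Finset.sum_le_sum fun k _ => norm_mul_le _ _)
    _ ≤ ∑ _k : m, ‖A‖ * ‖B‖ := by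
        gcongr <;> exact norm_entry_le_entrywise_sup_norm _
    _ = _ := by simp

theorem norm_conjTranspose_mul_mul_le {𝕜 : Type*} [RCLike 𝕜] [Fintype n] [DecidableEq n]
    {V : Matrix n n 𝕜} (hV : V ∈ unitaryGroup n 𝕜) (A : Matrix n n 𝕜) :
    ‖Vᴴ * A * V‖ ≤ Fintype.card n ^ 2 * ‖A‖ := by
  have hVnorm : ‖V‖ ≤ 1 := entrywise_sup_norm_bound_of_unitary hV
  have hVstar : ‖Vᴴ‖ ≤ 1 := entrywise_sup_norm_bound_of_unitary (Unitary.star_mem hV)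
  calc ‖Vᴴ * A * V‖ ≤ Fintype.card n * (Fintype.card n * (‖Vᴴ‖ * ‖A‖) * ‖V‖) := by
        grw [norm_mul_le_card_mul, norm_mul_le_card_mul]
    _ ≤ Fintype.card n * (Fintype.card n * (1 * ‖A‖) * 1) := by gcongr
    _ = _ := by ring

end Matrix

section Schrodinger

open Complex

variable {n : Type*} [Fintype n] [DecidableEq n]

theorem conjTranspose_mul_eq_of_schrodinger {A V W : ℝ → Matrix n n ℂ}
    (hA : ∀ t, (A t).IsHermitian) (hV : ∀ t, HasDerivAt V (-I • (A t * V t)) t)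
    (hW : ∀ t, HasDerivAt W (-I • (A t * W t)) t) (t : ℝ) :
    (V t)ᴴ * W t = (V 0)ᴴ * W 0 := by
  have hderiv : ∀ t, HasDerivAt (fun t => (V t)ᴴ * W t) 0 t := fun t => by
    refine ((hV t).star.matrix_mul (hW t)).congr_deriv ?_
    rw [star_smul, star_mul, star_eq_conjTranspose (A t), (hA t).eq]
    simp [Matrix.mul_assoc]
  exact is_const_of_deriv_eq_zero (fun t => (hderiv t).differentiableAt)
    (fun t => (hderiv t).deriv) t 0

structure IsTwoTonePropagator (h : ℝ → ℝ → Matrix n n ℂ) (ω₁ ω₂ : ℝ)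
    (U : ℝ → ℝ → ℝ → Matrix n n ℂ) : Prop where
  initial : ∀ x y, U 0 x y = 1
  hasDerivAt : ∀ t x y, HasDerivAt (fun t => U t x y)
    (-I • (h (ω₁ * t + x) (ω₂ * t + y) * U t x y)) t

namespace IsTwoTonePropagator

variable {h : ℝ → ℝ → Matrix n n ℂ} {ω₁ ω₂ : ℝ} {U : ℝ → ℝ → ℝ → Matrix n n ℂ}

theorem mem_unitaryGroup (hU : IsTwoTonePropagator h ω₁ ω₂ U) (hh : ∀ a b, (h a b).IsHermitian)
    (t x y : ℝ) : U t x y ∈ unitaryGroup n ℂ := by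
  rw [mem_unitaryGroup_iff', star_eq_conjTranspose]
  simpa [hU.initial] using conjTranspose_mul_eq_of_schrodinger (fun _ => hh _ _)
    (hU.hasDerivAt · x y) (hU.hasDerivAt · x y) t

theorem shift (hU : IsTwoTonePropagator h ω₁ ω₂ U) (hh : ∀ a b, (h a b).IsHermitian)
    (s t x y : ℝ) : U t (x + ω₁ * s) (y + ω₂ * s) = U (s + t) x y * (U s x y)ᴴ := by
  have hV : ∀ t, HasDerivAt (fun t => U (s + t) x y)
      (-I • (h (ω₁ * t + (x + ω₁ * s)) (ω₂ * t + (y + ω₂ * s)) * U (s + t) x y)) t := by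
    intro t
    have e₁ : ω₁ * (s + t) + x = ω₁ * t + (x + ω₁ * s) := by ring
    have e₂ : ω₂ * (s + t) + y = ω₂ * t + (y + ω₂ * s) := by ring
    have := (hU.hasDerivAt (s + t) x y).comp_const_add s t
    rwa [e₁, e₂] at this
  have hoverlap := conjTranspose_mul_eq_of_schrodinger (fun _ => hh _ _) hV
    (hU.hasDerivAt · (x + ω₁ * s) (y + ω₂ * s)) t
  rw [add_zero, hU.initial, Matrix.mul_one] at hoverlap
  rw [← hoverlap, ← Matrix.mul_assoc, ← star_eq_conjTranspose,
    Unitary.mul_star_self_of_mem (hU.mem_unitaryGroup hh _ x y), Matrix.one_mul]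

theorem lipschitzWith (hU : IsTwoTonePropagator h ω₁ ω₂ U) (hh : ∀ a b, (h a b).IsHermitian)
    {C : NNReal} (hC : ∀ a b, ‖h a b‖ ≤ C) (x y : ℝ) :
    LipschitzWith (Fintype.card n * C) (fun t => U t x y) := by
  refine lipschitzWith_of_nnnorm_deriv_le (fun t => (hU.hasDerivAt t x y).differentiableAt)
    fun t => ?_
  rw [(hU.hasDerivAt t x y).deriv, ← NNReal.coe_le_coe, coe_nnnorm, norm_smul, norm_neg,
    norm_I, one_mul]
  calc ‖h (ω₁ * t + x) (ω₂ * t + y) * U t x y‖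
      ≤ Fintype.card n * (‖h (ω₁ * t + x) (ω₂ * t + y)‖ * ‖U t x y‖) :=
        Matrix.norm_mul_le_card_mul _ _
    _ ≤ Fintype.card n * (C * 1) := by
        gcongr
        exacts [hC _ _, entrywise_sup_norm_bound_of_unitary (hU.mem_unitaryGroup hh t x y)]
    _ = _ := by simp

theorem continuous_time_phase₁ (hU : IsTwoTonePropagator h ω₁ ω₂ U)
    (hh : ∀ a b, (h a b).IsHermitian) (hb : Bornology.IsBounded (Set.range ↿h)) {y : ℝ}
    (hx : ∀ t, Continuous fun x => U t x y) : Continuous fun p : ℝ × ℝ => U p.1 p.2 y := by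
  obtain ⟨C, hC⟩ := isBounded_iff_forall_norm_le.1 hb
  have hhC : ∀ a b, ‖h a b‖ ≤ C.toNNReal := fun a b =>
    (hC _ ⟨(a, b), rfl⟩).trans (Real.le_coe_toNNReal C)
  exact continuous_prod_of_continuous_lipschitzWith _ _ hx fun x => hU.lipschitzWith hh hhC x y

/-- In the coordinates `(σ, r)` this is `U(σ + T) U(σ)†` at phases `(x + r, y)` (by `shift`),
whose `σ`-derivative is jointly continuous; hence it is jointly differentiable although only
partial derivatives in the phases are given. -/
theorem hasFDerivAt_comoving (hU : IsTwoTonePropagator h ω₁ ω₂ U)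
    (hh : ∀ a b, (h a b).IsHermitian) (hhc : Continuous ↿h)
    (hb : Bornology.IsBounded (Set.range ↿h)) {T x y : ℝ}
    (hx : ∀ t, Continuous fun x => U t x y) {D₁ : Matrix n n ℂ}
    (hD₁ : HasDerivAt (fun x => U T x y) D₁ x) :
    HasFDerivAt (fun p : ℝ × ℝ => U T (x + p.2 + ω₁ * p.1) (y + ω₂ * p.1))
      ((ContinuousLinearMap.toSpanSingleton ℝ
        (I • (U T x y * h x y - h (ω₁ * T + x) (ω₂ * T + y) * U T x y))).coprod
        (ContinuousLinearMap.toSpanSingleton ℝ D₁)) (0, 0) := by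
  set G : ℝ → ℝ → Matrix n n ℂ := fun σ r => U (σ + T) (x + r) y * (U σ (x + r) y)ᴴ
  set K : ℝ → ℝ → Matrix n n ℂ := fun σ r =>
    -I • (h (ω₁ * (σ + T) + (x + r)) (ω₂ * (σ + T) + y) * U (σ + T) (x + r) y) *
      (U σ (x + r) y)ᴴ +
    U (σ + T) (x + r) y * star (-I • (h (ω₁ * σ + (x + r)) (ω₂ * σ + y) * U σ (x + r) y))
  have hG : (fun p : ℝ × ℝ => U T (x + p.2 + ω₁ * p.1) (y + ω₂ * p.1)) = ↿G :=
    funext fun p => hU.shift hh p.1 T (x + p.2) y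
  have hK : ∀ σ r, HasDerivAt (G · r) (K σ r) σ := fun σ r =>
    ((hU.hasDerivAt (σ + T) (x + r) y).comp_add_const σ T).matrix_mul
      (hU.hasDerivAt σ (x + r) y).star
  have hKc : Continuous ↿K := by
    have hUc := hU.continuous_time_phase₁ hh hb hx
    have hhc' : Continuous fun q : ℝ × ℝ => h q.1 q.2 := hhc
    show Continuous fun p : ℝ × ℝ => K p.1 p.2
    fun_prop
  have hK0 : K 0 0 = I • (U T x y * h x y - h (ω₁ * T + x) (ω₂ * T + y) * U T x y) := by
    simp [K, hU.initial, (hh x y).star_eq, smul_sub, neg_add_eq_sub]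
  have hG0 : HasDerivAt (G 0) D₁ 0 := by
    simp only [G, zero_add, hU.initial, conjTranspose_one, Matrix.mul_one]
    exact HasDerivAt.comp_const_add x 0 (by rwa [add_zero])
  rw [hG, ← hK0]
  have hK' : ∀ᶠ v : ℝ × ℝ in 𝓝 (0, 0), HasFDerivAt (G · v.2)
      (ContinuousLinearMap.toSpanSingleton ℝ (K v.1 v.2)) v.1 :=
    .of_forall fun v => (hK v.1 v.2).hasFDerivAt
  have hKc' : ContinuousAt
      (fun v : ℝ × ℝ => ContinuousLinearMap.toSpanSingleton ℝ (K v.1 v.2)) (0, 0) :=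
    ((ContinuousLinearMap.toSpanSingletonLIE ℝ _).continuous.comp hKc).continuousAt
  exact hasFDerivAt_uncurry_coprod (f := G) (u := (0, 0))
    (f₁ := fun σ r => ContinuousLinearMap.toSpanSingleton ℝ (K σ r)) hK' hKc' hG0.hasFDerivAt

theorem smul_add_smul_eq (hU : IsTwoTonePropagator h ω₁ ω₂ U)
    (hh : ∀ a b, (h a b).IsHermitian) (hhc : Continuous ↿h)
    (hb : Bornology.IsBounded (Set.range ↿h)) {T x y : ℝ}
    (hx : ∀ t, Continuous fun x => U t x y) {D₁ D₂ : Matrix n n ℂ}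
    (hD₁ : HasDerivAt (fun x => U T x y) D₁ x) (hD₂ : HasDerivAt (fun y => U T x y) D₂ y) :
    ω₁ • D₁ + ω₂ • D₂ = I • (U T x y * h x y - h (ω₁ * T + x) (ω₂ * T + y) * U T x y) := by
  set A := I • (U T x y * h x y - h (ω₁ * T + x) (ω₂ * T + y) * U T x y)
  -- along `k ↦ (k, -ω₁ k)` the phases in `hasFDerivAt_comoving` are `(x, y + ω₂ k)`
  have hcurve : HasDerivAt (fun k : ℝ => (k, -ω₁ * k)) ((1 : ℝ), -ω₁) 0 :=
    (hasDerivAt_id 0).prodMk (((hasDerivAt_id 0).const_mul (-ω₁)).congr_deriv (mul_one _))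
  have hcomoving := (hU.hasFDerivAt_comoving hh hhc hb hx hD₁).comp_hasDerivAt_of_eq 0 hcurve
    (by simp)
  have hphase₂ : HasDerivAt (fun k => U T x (y + ω₂ * k)) (ω₂ • D₂) 0 := by
    have := hD₂.scomp_of_eq 0 (((hasDerivAt_id 0).const_mul ω₂).const_add y) (by simp)
    rwa [mul_one] at this
  have huniq := hphase₂.unique (hcomoving.congr_of_eventuallyEq (.of_forall fun k => by
    simp only [Function.comp_apply]; ring_nf))
  change ω₂ • D₂ = (1 : ℝ) • A + (-ω₁) • D₁ at huniq
  rw [huniq]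
  module

theorem conjTranspose_mul_smul_add_smul_eq (hU : IsTwoTonePropagator h ω₁ ω₂ U)
    (hh : ∀ a b, (h a b).IsHermitian) (hhc : Continuous ↿h)
    (hb : Bornology.IsBounded (Set.range ↿h)) {T x y : ℝ}
    (hx : ∀ t, Continuous fun x => U t x y) {D₁ D₂ : Matrix n n ℂ}
    (hD₁ : HasDerivAt (fun x => U T x y) D₁ x) (hD₂ : HasDerivAt (fun y => U T x y) D₂ y) :
    (U T x y)ᴴ * (ω₁ • D₁ + ω₂ • D₂) =
      I • (h x y - (U T x y)ᴴ * h (ω₁ * T + x) (ω₂ * T + y) * U T x y) := by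
  rw [hU.smul_add_smul_eq hh hhc hb hx hD₁ hD₂, Matrix.mul_smul, Matrix.mul_sub,
    ← Matrix.mul_assoc, ← star_eq_conjTranspose,
    Unitary.star_mul_self_of_mem (hU.mem_unitaryGroup hh T x y), Matrix.one_mul,
    Matrix.mul_assoc]

end IsTwoTonePropagator

end Schrodinger

theorem stmt3_general (d : ℕ) (ω₁ ω₂ : ℝ)
    (H₀ : Matrix (Fin d) (Fin d) ℂ) (H₁ H₂ : ℝ → Matrix (Fin d) (Fin d) ℂ)
    (hH₁per : Function.Periodic H₁ (2 * Real.pi))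
    (hH₂per : Function.Periodic H₂ (2 * Real.pi))
    (hH₁cont : Continuous H₁) (hH₂cont : Continuous H₂)
    (hH₁herm : ∀ x, (H₁ x).IsHermitian) (hH₂herm : ∀ x, (H₂ x).IsHermitian)
    (hH₀herm : H₀.IsHermitian)
    (U D₁ D₂ : ℝ → ℝ → ℝ → Matrix (Fin d) (Fin d) ℂ)
    (hU0 : ∀ φ₁ φ₂ : ℝ, U 0 φ₁ φ₂ = 1)
    (hSchr : ∀ T φ₁ φ₂ : ℝ, HasDerivAt (fun t => U t φ₁ φ₂)
      ((-Complex.I) • ((H₀ + H₁ (ω₁ * T + φ₁) + H₂ (ω₂ * T + φ₂)) * U T φ₁ φ₂)) T)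
    (hD₁ : ∀ T φ₁ φ₂ : ℝ, HasDerivAt (fun x => U T x φ₂) (D₁ T φ₁ φ₂) φ₁)
    (hD₂ : ∀ T φ₁ φ₂ : ℝ, HasDerivAt (fun y => U T φ₁ y) (D₂ T φ₁ φ₂) φ₂)
    (φ₁ φ₂ : ℝ) (P₁ P₂ : Matrix (Fin d) (Fin d) ℂ)
    (hP₁ : Tendsto (fun T : ℝ => (Complex.I / (T : ℂ)) • ((U T φ₁ φ₂)ᴴ * D₁ T φ₁ φ₂))
      atTop (𝓝 P₁))
    (hP₂ : Tendsto (fun T : ℝ => (Complex.I / (T : ℂ)) • ((U T φ₁ φ₂)ᴴ * D₂ T φ₁ φ₂))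
      atTop (𝓝 P₂)) :
    (ω₁ : ℂ) • P₁ + (ω₂ : ℂ) • P₂ = 0 := by
  set h : ℝ → ℝ → Matrix (Fin d) (Fin d) ℂ := fun a b => H₀ + H₁ a + H₂ b
  have hU : IsTwoTonePropagator h ω₁ ω₂ U := ⟨hU0, hSchr⟩
  have hh : ∀ a b, (h a b).IsHermitian := fun a b => (hH₀herm.add (hH₁herm a)).add (hH₂herm b)
  have hhc : Continuous ↿h := by
    show Continuous fun p : ℝ × ℝ => H₀ + H₁ p.1 + H₂ p.2
    fun_prop
  have hb : Bornology.IsBounded (Set.range ↿h) := isBounded_range_add_add H₀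
    (hH₁per.isBounded_of_continuous Real.two_pi_pos.ne' hH₁cont)
    (hH₂per.isBounded_of_continuous Real.two_pi_pos.ne' hH₂cont)
  obtain ⟨C, hC⟩ := isBounded_iff_forall_norm_le.1 hb
  have hhC : ∀ a b, ‖h a b‖ ≤ C := fun a b => hC _ ⟨(a, b), rfl⟩
  have hx : ∀ t, Continuous fun x => U t x φ₂ := fun t =>
    continuous_iff_continuousAt.2 fun x => (hD₁ t x φ₂).continuousAt
  have hlim : Tendsto (fun T : ℝ => (Complex.I / (T : ℂ)) •
      ((U T φ₁ φ₂)ᴴ * (ω₁ • D₁ T φ₁ φ₂ + ω₂ • D₂ T φ₁ φ₂))) atTop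
      (𝓝 ((ω₁ : ℂ) • P₁ + (ω₂ : ℂ) • P₂)) := by
    convert (hP₁.const_smul (ω₁ : ℂ)).add (hP₂.const_smul (ω₂ : ℂ)) using 2 with T
    rw [← Complex.coe_smul, ← Complex.coe_smul, Matrix.mul_add, Matrix.mul_smul, Matrix.mul_smul,
      smul_add, smul_comm (Complex.I / (T : ℂ)), smul_comm (Complex.I / (T : ℂ))]
  refine tendsto_nhds_unique hlim ?_
  simp only [hU.conjTranspose_mul_smul_add_smul_eq hh hhc hb hx (hD₁ _ φ₁ φ₂) (hD₂ _ φ₁ φ₂)]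
  refine tendsto_div_smul_atTop_zero Complex.I (C := C + Fintype.card (Fin d) ^ 2 * C) fun T => ?_
  grw [norm_smul, Complex.norm_I, one_mul, norm_sub_le,
    Matrix.norm_conjTranspose_mul_mul_le (hU.mem_unitaryGroup hh T φ₁ φ₂),
    hhC, hhC]

/-- energy conservation of power operators: For a two-tone Floquet
Hamiltonian `H(t,φ₁,φ₂) = H₀ + H₁(ω₁t+φ₁) + H₂(ω₂t+φ₂)` with `2π`-periodic continuous
drive terms, let `U(T,φ₁,φ₂)` solve the Schrödinger equation with `U(0) = 1`, and let
`D₁, D₂` denote the partial derivatives of `U` in `φ₁, φ₂`. If the power operators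
`Pⱼ = lim_{T→∞} (i/T) U† ∂_{φⱼ} U` exist, then `ω₁ P₁ + ω₂ P₂ = 0`; equivalently, each
quasienergy `εₙ` with `(ω₁∂_{φ₁}+ω₂∂_{φ₂})`-derivative `Dεₙ` satisfies `Dεₙ = 0`. -/
theorem stmt3 (d : ℕ) (ω₁ ω₂ : ℝ) (hω₁ : 0 < ω₁) (hω₂ : 0 < ω₂)
    (H₀ : Matrix (Fin d) (Fin d) ℂ) (H₁ H₂ : ℝ → Matrix (Fin d) (Fin d) ℂ)
    (hH₁per : Function.Periodic H₁ (2 * Real.pi))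
    (hH₂per : Function.Periodic H₂ (2 * Real.pi))
    (hH₁cont : Continuous H₁) (hH₂cont : Continuous H₂)
    (hH₁herm : ∀ x, (H₁ x).IsHermitian) (hH₂herm : ∀ x, (H₂ x).IsHermitian)
    (hH₀herm : H₀.IsHermitian)
    (U D₁ D₂ : ℝ → ℝ → ℝ → Matrix (Fin d) (Fin d) ℂ)
    (hU0 : ∀ φ₁ φ₂ : ℝ, U 0 φ₁ φ₂ = 1)
    (hSchr : ∀ T φ₁ φ₂ : ℝ, HasDerivAt (fun t => U t φ₁ φ₂)
      ((-Complex.I) • ((H₀ + H₁ (ω₁ * T + φ₁) + H₂ (ω₂ * T + φ₂)) * U T φ₁ φ₂)) T)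
    (hD₁ : ∀ T φ₁ φ₂ : ℝ, HasDerivAt (fun x => U T x φ₂) (D₁ T φ₁ φ₂) φ₁)
    (hD₂ : ∀ T φ₁ φ₂ : ℝ, HasDerivAt (fun y => U T φ₁ y) (D₂ T φ₁ φ₂) φ₂)
    (φ₁ φ₂ : ℝ) (P₁ P₂ : Matrix (Fin d) (Fin d) ℂ)
    (hP₁ : Tendsto (fun T : ℝ => (Complex.I / (T : ℂ)) • ((U T φ₁ φ₂)ᴴ * D₁ T φ₁ φ₂))
      atTop (𝓝 P₁))
    (hP₂ : Tendsto (fun T : ℝ => (Complex.I / (T : ℂ)) • ((U T φ₁ φ₂)ᴴ * D₂ T φ₁ φ₂))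
      atTop (𝓝 P₂)) :
    (ω₁ : ℂ) • P₁ + (ω₂ : ℂ) • P₂ = 0 :=
  stmt3_general d ω₁ ω₂ H₀ H₁ H₂ hH₁per hH₂per hH₁cont hH₂cont hH₁herm hH₂herm hH₀herm U D₁ D₂ hU0
    hSchr hD₁ hD₂ φ₁ φ₂ P₁ P₂ hP₁ hP₂
end
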